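/- Define the complementary data cornerwise/nodally by c₂ = 1 − c (i.e. c₂⁺_{j−1/2} = 1 − c⁺_{j−1/2}, c₂⁻_{j+1/2} = 1 − c⁻_{j+1/2}), r₂ = Φ − r at every node, c̃₂_j^i = 1 − c̃_j^i, and let r̄₂_j^{new} denote the Euler-forward cell-average update computed from the data (c₂, r₂, z₂, c̃₂) with the same velocity traces u⁺, diffusion values D^±, parameters α, α̃, flow rates q_j^i and pressure values P_j^i. Suppose the discrete pressure relation holds for every cell j = 1,…,N: (Δx/2)·∑_{i=1,2}(z₁·r(x_j^i) + z₂·(Φ(x_j^i) − r(x_j^i)))·P_j^i = û_{j−1/2} − û_{j+1/2} + (Δx/2)·∑_{i=1,2} q_j^i, where û_{j+1/2} = u⁺_{j+1/2} for 1 ≤ j ≤ N−1, û_{1/2} = û_{N+1/2} = 0, and Φ(x_j^1) = μ₁Φ_{j−1/2} + μ₂Φ_{j+1/2}, Φ(x_j^2) = μ₂Φ_{j−1/2} + μ₁Φ_{j+1/2}. Then for every cell j = 1,…,N one has the exact identity r̄_j^{new} + r̄₂_j^{new} = Φ̄_j := (Φ_{j−1/2} + Φ_{j+1/2})/2. -/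

import Mathlib

noncomputable section

namespace DG1D

/-- Gauss constant `μ₁ = (3+√3)/6`. -/
def mu1 : ℝ := (3 + Real.sqrt 3) / 6

/-- Gauss constant `μ₂ = (3-√3)/6`. -/
def mu2 : ℝ := (3 - Real.sqrt 3) / 6

/-- Cell average `r̄_j = (r⁺_{j-1/2} + r⁻_{j+1/2})/2`.  Here `Φ j` denotes the nodal
porosity value `Φ_{j+1/2}` (so `Φ (j-1)` is `Φ_{j-1/2}`), `cP j` denotes the left-node
concentration trace `c⁺_{j-1/2}` of cell `j`, and `cM j` denotes the right-node trace
`c⁻_{j+1/2}` of cell `j`. -/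
def rbar (Φ cP cM : ℕ → ℝ) (j : ℕ) : ℝ :=
  (cP j * Φ (j - 1) + cM j * Φ j) / 2

/-- Convective flux `ûc_{j+1/2} = u⁺_{j+1/2}·c⁺_{j+1/2} - α·[c]_{j+1/2}` at the interior
node `j+1/2` (`u j` denotes `u⁺_{j+1/2}`; `c⁺_{j+1/2} = cP (j+1)`, `c⁻_{j+1/2} = cM j`). -/
def uc (u cP cM : ℕ → ℝ) (α : ℝ) (j : ℕ) : ℝ :=
  u j * cP (j + 1) - α * (cP (j + 1) - cM j)

/-- Diffusive flux `F̂_{j+1/2} = (D⁻·(c_x)⁻ + D⁺·(c_x)⁺)/2 + (α̃/Δx)·[c]_{j+1/2}` at the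
interior node `j+1/2`, with `(c_x)⁻_{j+1/2} = (c⁻_{j+1/2} - c⁺_{j-1/2})/Δx` and
`(c_x)⁺_{j+1/2} = (c⁻_{j+3/2} - c⁺_{j+1/2})/Δx`. -/
def Fhat (Dm Dp cP cM : ℕ → ℝ) (αt Δx : ℝ) (j : ℕ) : ℝ :=
  (Dm j * ((cM j - cP j) / Δx) + Dp j * ((cM (j + 1) - cP (j + 1)) / Δx)) / 2
    + (αt / Δx) * (cP (j + 1) - cM j)

/-- Value of the linear function `r` at Gauss point `i` of cell `j`:
`r(x_j^1) = μ₁·r⁺_{j-1/2} + μ₂·r⁻_{j+1/2}`, `r(x_j^2) = μ₂·r⁺_{j-1/2} + μ₁·r⁻_{j+1/2}`. -/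
def rG (Φ cP cM : ℕ → ℝ) (j : ℕ) (i : Fin 2) : ℝ :=
  if i = 0 then mu1 * (cP j * Φ (j - 1)) + mu2 * (cM j * Φ j)
  else mu2 * (cP j * Φ (j - 1)) + mu1 * (cM j * Φ j)

/-- Value of the linear function `c` at Gauss point `i` of cell `j`. -/
def cG (cP cM : ℕ → ℝ) (j : ℕ) (i : Fin 2) : ℝ :=
  if i = 0 then mu1 * cP j + mu2 * cM j else mu2 * cP j + mu1 * cM j

/-- Value of the linear interpolant of `Φ` at Gauss point `i` of cell `j`. -/
def phiG (Φ : ℕ → ℝ) (j : ℕ) (i : Fin 2) : ℝ :=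
  if i = 0 then mu1 * Φ (j - 1) + mu2 * Φ j else mu2 * Φ (j - 1) + mu1 * Φ j

/-- Convective flux with the boundary conventions `ûc_{1/2} = ûc_{N+1/2} = 0`. -/
def ucB (N : ℕ) (u cP cM : ℕ → ℝ) (α : ℝ) (j : ℕ) : ℝ :=
  if 1 ≤ j ∧ j ≤ N - 1 then uc u cP cM α j else 0

/-- Diffusive flux with the boundary conventions `F̂_{1/2} = F̂_{N+1/2} = 0`. -/
def FhatB (N : ℕ) (Dm Dp cP cM : ℕ → ℝ) (αt Δx : ℝ) (j : ℕ) : ℝ :=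
  if 1 ≤ j ∧ j ≤ N - 1 then Fhat Dm Dp cP cM αt Δx j else 0

/-- Velocity flux `û_{j+1/2}` with boundary conventions `û_{1/2} = û_{N+1/2} = 0`. -/
def uhatB (N : ℕ) (u : ℕ → ℝ) (j : ℕ) : ℝ :=
  if 1 ≤ j ∧ j ≤ N - 1 then u j else 0

/-- The Euler-forward cell-average update
`r̄_j^{new} = r̄_j + λ(ûc_{j-1/2} - ûc_{j+1/2}) - λ(F̂_{j-1/2} - F̂_{j+1/2})
  + (Δt/2)·∑_{i=1,2}(c̃_j^i·q_j^i - z₁·r(x_j^i)·P_j^i)`. -/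
def rbarnew (N : ℕ) (Φ cP cM u Dm Dp : ℕ → ℝ) (q ct P : ℕ → Fin 2 → ℝ)
    (α αt z1 Δx Δt : ℝ) (j : ℕ) : ℝ :=
  rbar Φ cP cM j
    + (Δt / Δx) * (ucB N u cP cM α (j - 1) - ucB N u cP cM α j)
    - (Δt / Δx) * (FhatB N Dm Dp cP cM αt Δx (j - 1) - FhatB N Dm Dp cP cM αt Δx j)
    + (Δt / 2) * ∑ i : Fin 2, (ct j i * q j i - z1 * rG Φ cP cM j i * P j i)

/-!
The complementary data `1 - c` enter the scheme affinely: the convective fluxes of `c` and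
`1 - c` add up to the velocity flux `û` (the jump penalties cancel), the diffusive fluxes
cancel (the constant `1` has no derivative and no jump), and the source terms add up to
`q` minus the compressibility term of the pressure relation. Hence the two updates sum to
`Φ̄_j` plus `Δt/Δx` times the residual of the discrete pressure relation in cell `j`.
-/

lemma ucB_one_sub (N : ℕ) (u cP cM : ℕ → ℝ) (α : ℝ) (j : ℕ) :
    ucB N u (fun k => 1 - cP k) (fun k => 1 - cM k) α j
      = uhatB N u j - ucB N u cP cM α j := by
  unfold ucB uhatB uc
  split_ifs <;> ring

lemma FhatB_one_sub (N : ℕ) (Dm Dp cP cM : ℕ → ℝ) (αt Δx : ℝ) (j : ℕ) :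
    FhatB N Dm Dp (fun k => 1 - cP k) (fun k => 1 - cM k) αt Δx j
      = -FhatB N Dm Dp cP cM αt Δx j := by
  unfold FhatB Fhat
  split_ifs <;> ring

lemma rG_one_sub (Φ cP cM : ℕ → ℝ) (j : ℕ) (i : Fin 2) :
    rG Φ (fun k => 1 - cP k) (fun k => 1 - cM k) j i = phiG Φ j i - rG Φ cP cM j i := by
  unfold rG phiG
  split_ifs <;> ring

lemma rbar_add_rbar_one_sub (Φ cP cM : ℕ → ℝ) (j : ℕ) :
    rbar Φ cP cM j + rbar Φ (fun k => 1 - cP k) (fun k => 1 - cM k) j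
      = (Φ (j - 1) + Φ j) / 2 := by
  unfold rbar
  ring

lemma rbarnew_add_rbarnew_one_sub (N : ℕ) (Δx Δt : ℝ) (Φ cP cM u Dm Dp : ℕ → ℝ)
    (q ct P : ℕ → Fin 2 → ℝ) (α αt z1 z2 : ℝ) (j : ℕ) :
    rbarnew N Φ cP cM u Dm Dp q ct P α αt z1 Δx Δt j
        + rbarnew N Φ (fun k => 1 - cP k) (fun k => 1 - cM k) u Dm Dp q
            (fun k i => 1 - ct k i) P α αt z2 Δx Δt j
      = (Φ (j - 1) + Φ j) / 2 + (Δt / Δx) * (uhatB N u (j - 1) - uhatB N u j)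
          + (Δt / 2) * ∑ i : Fin 2, q j i
          - (Δt / 2) * ∑ i : Fin 2,
              (z1 * rG Φ cP cM j i + z2 * (phiG Φ j i - rG Φ cP cM j i)) * P j i := by
  have hrbar := rbar_add_rbar_one_sub Φ cP cM j
  simp only [rbarnew, ucB_one_sub, FhatB_one_sub, rG_one_sub, Fin.sum_univ_two]
  linear_combination hrbar

theorem complementary_updates_sum_to_porosity_1d
    (N : ℕ) (Δx Δt : ℝ) (hΔx : 0 < Δx)
    (Φ cP cM u Dm Dp : ℕ → ℝ) (q ct P : ℕ → Fin 2 → ℝ) (α αt z1 z2 : ℝ)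
    -- discrete pressure relation in every cell
    (hpress : ∀ j, 1 ≤ j → j ≤ N →
      (Δx / 2) * ∑ i : Fin 2,
          (z1 * rG Φ cP cM j i + z2 * (phiG Φ j i - rG Φ cP cM j i)) * P j i
        = uhatB N u (j - 1) - uhatB N u j + (Δx / 2) * ∑ i : Fin 2, q j i) :
    ∀ j, 1 ≤ j → j ≤ N →
      rbarnew N Φ cP cM u Dm Dp q ct P α αt z1 Δx Δt j
        + rbarnew N Φ (fun k => 1 - cP k) (fun k => 1 - cM k) u Dm Dp q
            (fun k i => 1 - ct k i) P α αt z2 Δx Δt j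
        = (Φ (j - 1) + Φ j) / 2 := by
  intro j hj1 hjN
  rw [rbarnew_add_rbarnew_one_sub]
  field_simp
  linear_combination (-2 * Δt) * hpress j hj1 hjN

end DG1D
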